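/- Let W_E be a BSC(p) viewed as addition of Bernoulli(p) noise, let C_E ⊆ C_B ⊆ F_2^n be nested linear codes, let M be uniform on the cosets C_B/C_E, X = X' + T where X' is uniform on C_E and T is the coset leader of M (all independent of the noise V ~ Bern(p)^{⊗n}), and Z = X + V. Then the information leakage satisfies I(M; Z) ≤ D(P_{X'+V} || U_{F_2^n}), i.e., leakage is bounded by the KL divergence of the channel output under the uniform distribution on C_E from the uniform distribution on F_2^n. -/

import Mathlib

/-!
Given the message `m`, the output `Z` is `T m + (X' + V)`, so its conditional law is the
translate by `T m` of the law `Q` of `X' + V`, and `D(P_{Z|M=m} ‖ U) = D(Q ‖ U)` for every `m`.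
With the uniform reference `U`, the mutual information splits as
`I(M; Z) = 𝔼_m D(P_{Z|M=m} ‖ U) - D(P_Z ‖ U)`, and the subtracted divergence is nonnegative
by Gibbs' inequality.
-/

open scoped Classical

/-- Hamming weight of a binary vector. -/
noncomputable def wt {n : ℕ} (v : Fin n → ZMod 2) : ℕ :=
  (Finset.univ.filter fun j => v j = 1).card

open Finset

lemma pow_wt_mul_pow_sub_wt {R : Type*} [CommMonoid R] {n : ℕ} (a b : R) (v : Fin n → ZMod 2) :
    a ^ wt v * b ^ (n - wt v) = ∏ j, if v j = 1 then a else b := by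
  rw [prod_ite, prod_const, prod_const, wt]
  congr 2
  have := card_filter_add_card_filter_not (s := (univ : Finset (Fin n))) (fun j => v j = 1)
  rw [card_univ, Fintype.card_fin] at this
  omega

lemma sum_pow_wt_mul_pow_sub_wt {R : Type*} [CommSemiring R] (n : ℕ) (a b : R) :
    ∑ v : Fin n → ZMod 2, a ^ wt v * b ^ (n - wt v) = (a + b) ^ n := by
  have hbit : ∑ x : ZMod 2, (if x = 1 then a else b) = a + b := by
    rw [add_comm]; exact Fin.sum_univ_two _
  simp_rw [pow_wt_mul_pow_sub_wt]
  rw [← Fintype.prod_sum (fun (_ : Fin n) (x : ZMod 2) => if x = 1 then a else b)]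
  simp only [hbit, prod_const, card_univ, Fintype.card_fin]

section Divergence

open Real InformationTheory

variable {α M Z : Type*} [Fintype α] [Fintype M] [Fintype Z]

lemma sum_mul_logb_div_nonneg {b : ℝ} (hb : 1 < b) {f g : α → ℝ} (hf : ∀ x, 0 ≤ f x)
    (hg : ∀ x, 0 < g x) (hfg : ∑ x, f x = ∑ x, g x) :
    0 ≤ ∑ x, f x * logb b (f x / g x) := by
  have hkl : ∀ x, g x * klFun (f x / g x) = f x * log (f x / g x) + (g x - f x) := by
    intro x
    have := (hg x).ne'
    rw [klFun_apply]
    field_simp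
    ring
  have hlog : ∑ x, f x * log (f x / g x) = ∑ x, g x * klFun (f x / g x) := by
    rw [sum_congr rfl fun x _ => hkl x, sum_add_distrib, sum_sub_distrib, hfg, sub_self, add_zero]
  simp only [logb, mul_div_assoc', ← sum_div, hlog]
  refine div_nonneg (sum_nonneg fun x _ => mul_nonneg (hg x).le ?_) (log_nonneg hb.le)
  exact klFun_nonneg (div_nonneg (hf x) (hg x).le)

lemma sum_mul_logb_mutualInfo_eq (b : ℝ) {P : M × Z → ℝ} (hP : ∀ x, 0 ≤ P x) {u : Z → ℝ}
    (hu : ∀ z, 0 < u z) :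
    ∑ m, ∑ z, P (m, z) * logb b (P (m, z) / ((∑ z', P (m, z')) * ∑ m', P (m', z)))
      = ∑ m, ∑ z, P (m, z) * logb b (P (m, z) / ((∑ z', P (m, z')) * u z))
        - ∑ z, (∑ m, P (m, z)) * logb b ((∑ m, P (m, z)) / u z) := by
  have hpt : ∀ m z, P (m, z) * logb b (P (m, z) / ((∑ z', P (m, z')) * ∑ m', P (m', z)))
      = P (m, z) * logb b (P (m, z) / ((∑ z', P (m, z')) * u z))
        - P (m, z) * logb b ((∑ m', P (m', z)) / u z) := by
    intro m z
    rcases (hP (m, z)).eq_or_lt with h | h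
    · simp [← h]
    have hM : 0 < ∑ z', P (m, z') :=
      h.trans_le (single_le_sum (fun z' _ => hP (m, z')) (mem_univ z))
    have hZ : 0 < ∑ m', P (m', z) :=
      h.trans_le (single_le_sum (f := fun m' => P (m', z)) (fun m' _ => hP (m', z)) (mem_univ m))
    have := (hu z).ne'
    rw [← mul_sub, ← logb_div (by positivity) (by positivity)]
    congr 2
    field_simp
  simp only [hpt, sum_sub_distrib]
  rw [sum_comm (f := fun m z => P (m, z) * logb b ((∑ m', P (m', z)) / u z))]
  simp only [sum_mul]

lemma sum_mul_logb_mutualInfo_le {b : ℝ} (hb : 1 < b) {P : M × Z → ℝ} (hP : ∀ x, 0 ≤ P x)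
    {u : Z → ℝ} (hu : ∀ z, 0 < u z) (hPu : ∑ z, ∑ m, P (m, z) = ∑ z, u z) :
    ∑ m, ∑ z, P (m, z) * logb b (P (m, z) / ((∑ z', P (m, z')) * ∑ m', P (m', z)))
      ≤ ∑ m, ∑ z, P (m, z) * logb b (P (m, z) / ((∑ z', P (m, z')) * u z)) := by
  rw [sum_mul_logb_mutualInfo_eq b hP hu]
  exact sub_le_self _ (sum_mul_logb_div_nonneg hb (fun z => sum_nonneg fun m _ => hP (m, z)) hu hPu)

end Divergence

section Translation

open Real

variable {G M : Type*} [AddCommGroup G] [Fintype G] [Fintype M]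

lemma sum_comp_sub_right {R : Type*} [AddCommMonoid R] (f : G → R) (t : G) :
    ∑ z, f (z - t) = ∑ z, f z :=
  (Equiv.subRight t).sum_comp f

lemma sum_mul_logb_translate (b u : ℝ) {c : ℝ} (hc : c ≠ 0) {Q : G → ℝ} (hQ : ∑ z, Q z = 1)
    (t : G) :
    ∑ z, c * Q (z - t) * logb b (c * Q (z - t) / ((∑ z', c * Q (z' - t)) * u))
      = c * ∑ z, Q z * logb b (Q z / u) := by
  have hmass : ∑ z', c * Q (z' - t) = c := by
    rw [← mul_sum, sum_comp_sub_right Q, hQ, mul_one]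
  simp only [hmass, mul_div_mul_left _ _ hc, mul_assoc, ← mul_sum]
  exact congrArg _ (sum_comp_sub_right (fun z => Q z * logb b (Q z / u)) t)

lemma sum_mul_logb_mutualInfo_le_of_translate {b : ℝ} (hb : 1 < b) [Nonempty M] {Q : G → ℝ}
    (hQ0 : ∀ z, 0 ≤ Q z) (hQ1 : ∑ z, Q z = 1) {u : ℝ} (hu : 0 < u) (hGu : ∑ _z : G, u = 1)
    (T : M → G) {P : M × G → ℝ} (hP : ∀ m z, P (m, z) = 1 / Fintype.card M * Q (z - T m)) :
    ∑ m, ∑ z, P (m, z) * logb b (P (m, z) / ((∑ z', P (m, z')) * ∑ m', P (m', z)))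
      ≤ ∑ z, Q z * logb b (Q z / u) := by
  have hM : (Fintype.card M : ℝ) ≠ 0 := Nat.cast_ne_zero.mpr Fintype.card_ne_zero
  have hP0 : ∀ x, 0 ≤ P x := fun ⟨m, z⟩ => hP m z ▸ mul_nonneg (by positivity) (hQ0 _)
  have hmass : ∑ z, ∑ m, P (m, z) = ∑ _z : G, u := by
    rw [hGu, sum_comm]
    simp only [hP, ← mul_sum, sum_comp_sub_right Q, hQ1, mul_one, sum_const, card_univ,
      nsmul_eq_mul, mul_one_div_cancel hM]
  calc _ ≤ ∑ m, ∑ z, P (m, z) * logb b (P (m, z) / ((∑ z', P (m, z')) * u)) :=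
        sum_mul_logb_mutualInfo_le hb hP0 (fun _ => hu) hmass
    _ = ∑ _m : M, 1 / Fintype.card M * ∑ z, Q z * logb b (Q z / u) := by
        simp only [hP, sum_mul_logb_translate b u (one_div_ne_zero hM) hQ1]
    _ = ∑ z, Q z * logb b (Q z / u) := by
        rw [sum_const, card_univ, nsmul_eq_mul, ← mul_assoc, mul_one_div_cancel hM, one_mul]

end Translation

section UniformAddNoise

variable {G : Type*} [AddCommGroup G] [Fintype G]

/-- The law `P_{X'+V}` of `X' + V` for `X'` uniform on `S` and independent noise `V ∼ β`. -/
noncomputable def uniformAddNoise (S : Set G) (β : G → ℝ) (z : G) : ℝ :=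
  ∑ c, if c ∈ S then 1 / (Nat.card S : ℝ) * β (z - c) else 0

lemma uniformAddNoise_nonneg (S : Set G) {β : G → ℝ} (hβ : ∀ v, 0 ≤ β v) (z : G) :
    0 ≤ uniformAddNoise S β z :=
  sum_nonneg fun c _ => by
    split_ifs
    · exact mul_nonneg (by positivity) (hβ _)
    · exact le_rfl

lemma sum_uniformAddNoise {S : Set G} (hS : S.Nonempty) {β : G → ℝ} (hβ : ∑ v, β v = 1) :
    ∑ z, uniformAddNoise S β z = 1 := by
  have : Nonempty S := hS.to_subtype
  have hS' : (Nat.card S : ℝ) ≠ 0 := Nat.cast_ne_zero.mpr Nat.card_pos.ne'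
  have hmass : ∀ c, ∑ z, (if c ∈ S then 1 / (Nat.card S : ℝ) * β (z - c) else 0)
      = if c ∈ S then 1 / (Nat.card S : ℝ) else 0 := by
    intro c
    split_ifs
    · rw [← mul_sum, sum_comp_sub_right β, hβ, mul_one]
    · exact sum_const_zero
  simp only [uniformAddNoise]
  rw [sum_comm]
  simp only [hmass]
  rw [sum_ite, sum_const_zero, add_zero, sum_const, nsmul_eq_mul, ← Fintype.card_subtype,
    ← Nat.card_eq_fintype_card, mul_one_div_cancel hS']

end UniformAddNoise

theorem stmt_15_general (n : ℕ) (p : ℝ) (hp0 : 0 < p) (hp1 : p < 1)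
    (CE : Submodule (ZMod 2) (Fin n → ZMod 2))
    {M : Type*} [Fintype M] [Nonempty M] (T : M → (Fin n → ZMod 2))
    (β : (Fin n → ZMod 2) → ℝ)
    (hβ : ∀ v, β v = p ^ wt v * (1 - p) ^ (n - wt v))
    (PMZ : M × (Fin n → ZMod 2) → ℝ)
    (hPMZ : ∀ m z, PMZ (m, z) = (1 / (Fintype.card M : ℝ)) *
      ∑ x : Fin n → ZMod 2,
        (if x - T m ∈ CE then (1 / (Nat.card CE : ℝ)) * β (z - x) else 0)) :
    (∑ m, ∑ z, PMZ (m, z) * Real.logb 2 (PMZ (m, z) /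
        ((∑ z', PMZ (m, z')) * (∑ m', PMZ (m', z)))))
      ≤ ∑ z : Fin n → ZMod 2,
          (∑ c, (if c ∈ CE then (1 / (Nat.card CE : ℝ)) * β (z - c) else 0))
            * Real.logb 2
              ((∑ c, (if c ∈ CE then (1 / (Nat.card CE : ℝ)) * β (z - c) else 0))
                / ((1 : ℝ) / 2 ^ n)) := by
  have hβ0 : ∀ v, 0 ≤ β v := fun v =>
    hβ v ▸ mul_nonneg (pow_nonneg hp0.le _) (pow_nonneg (sub_nonneg.2 hp1.le) _)
  have hβ1 : ∑ v, β v = 1 := by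
    simp only [hβ, sum_pow_wt_mul_pow_sub_wt, add_sub_cancel, one_pow]
  have hP : ∀ m z, PMZ (m, z) = 1 / Fintype.card M * uniformAddNoise CE β (z - T m) := by
    intro m z
    rw [hPMZ, uniformAddNoise]
    conv_rhs => rw [← sum_comp_sub_right _ (T m)]
    simp only [sub_sub_sub_cancel_right]
    rfl
  have hU : ∑ _z : Fin n → ZMod 2, (1 : ℝ) / 2 ^ n = 1 := by simp
  exact sum_mul_logb_mutualInfo_le_of_translate one_lt_two (uniformAddNoise_nonneg _ hβ0)
    (sum_uniformAddNoise ⟨0, CE.zero_mem⟩ hβ1) (by positivity) hU T hP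

/-- Leakage bound for coset coding on a BSC(p): with nested codes `C_E ⊆ C_B`, message `M`
uniform over the cosets of `C_E` in `C_B` (with coset-leader system `T`), `X` uniform in the
coset of `M`, additive noise `V ~ Bern(p)^{⊗n}` and `Z = X + V`, the leakage satisfies
`I(M; Z) ≤ D(P_{X'+V} ‖ U_{F_2^n})` where `X'` is uniform on `C_E`. -/
theorem stmt_15 (n : ℕ) (p : ℝ) (hp0 : 0 < p) (hp1 : p < 1)
    (CE CB : Submodule (ZMod 2) (Fin n → ZMod 2)) (hEB : CE ≤ CB)
    {M : Type*} [Fintype M] [Nonempty M] (T : M → (Fin n → ZMod 2))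
    (hT1 : ∀ m, T m ∈ CB)
    (hT2 : ∀ m m', T m - T m' ∈ CE → m = m')
    (hT3 : ∀ x ∈ CB, ∃ m, x - T m ∈ CE)
    (β : (Fin n → ZMod 2) → ℝ)
    (hβ : ∀ v, β v = p ^ wt v * (1 - p) ^ (n - wt v))
    (PMZ : M × (Fin n → ZMod 2) → ℝ)
    (hPMZ : ∀ m z, PMZ (m, z) = (1 / (Fintype.card M : ℝ)) *
      ∑ x : Fin n → ZMod 2,
        (if x - T m ∈ CE then (1 / (Nat.card CE : ℝ)) * β (z - x) else 0)) :
    (∑ m, ∑ z, PMZ (m, z) * Real.logb 2 (PMZ (m, z) /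
        ((∑ z', PMZ (m, z')) * (∑ m', PMZ (m', z)))))
      ≤ ∑ z : Fin n → ZMod 2,
          (∑ c, (if c ∈ CE then (1 / (Nat.card CE : ℝ)) * β (z - c) else 0))
            * Real.logb 2
              ((∑ c, (if c ∈ CE then (1 / (Nat.card CE : ℝ)) * β (z - c) else 0))
                / ((1 : ℝ) / 2 ^ n)) :=
  stmt_15_general n p hp0 hp1 CE T β hβ PMZ hPMZ
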